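/- arXiv:alg-geom/9610005 — 2 statements merged into one kernel-verified Lean document; each statement's English description precedes it below -/
import Mathlib

section
/- Let ζ : 𝒬₀ → ℝ and let f ∈ F_ζ be such that T = supp(f) is a tree of rank 0. Then the tangent cone of the polyhedron π(F_ζ) at the extreme point π(f) equals π(F₀(T)); moreover π(F₀(T̄)) = π(F₀(T)), so this tangent cone is independent of ζ. -/
/-!
Common framework: finite quivers, flows, boundaries, cycles, closures, the projection π,
and the solution polyhedra of the (generalised) transportation problem, following
Sardo Infirri, "Orbifold Singularities and McKay Flows".
-/

open Finset

/-- A (finite) quiver given by tail and head maps on a type of arrows. -/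
structure FQuiver (V A : Type) where
  t : A → V
  h : A → V

namespace FQuiver

variable {V A : Type}

/-- The boundary (net contribution) of a flow `f : A → R` at each vertex. -/
def boundary [Fintype A] [DecidableEq V] (Q : FQuiver V A) {R : Type} [AddCommGroup R]
    (f : A → R) : V → R := fun v =>
  (∑ a ∈ univ.filter (fun a => Q.h a = v), f a) -
  (∑ a ∈ univ.filter (fun a => Q.t a = v), f a)

/-- Source of a step (an arrow together with a direction of traversal). -/
def stepSrc (Q : FQuiver V A) (s : A × Bool) : V := if s.2 then Q.t s.1 else Q.h s.1

/-- Destination of a step. -/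
def stepDst (Q : FQuiver V A) (s : A × Bool) : V := if s.2 then Q.h s.1 else Q.t s.1

/-- A walk (path) from `v` to `v'` in the underlying undirected graph of the quiver:
a nonempty list of steps which compose, with consecutive arrows distinct. -/
def IsWalk (Q : FQuiver V A) (p : List (A × Bool)) (v v' : V) : Prop :=
  p ≠ [] ∧
  p.head?.map Q.stepSrc = some v ∧
  p.getLast?.map Q.stepDst = some v' ∧
  List.Chain' (fun s s' => Q.stepDst s = Q.stepSrc s') p ∧
  List.Chain' (fun s s' : A × Bool => s.1 ≠ s'.1) p

/-- A cycle: a closed walk. -/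
def IsCycle (Q : FQuiver V A) (p : List (A × Bool)) : Prop := ∃ v, Q.IsWalk p v v

end FQuiver

variable {V A : Type}

/-- The positive part of a walk/cycle: the arrows traversed in agreement with it. -/
def posArrows (p : List (A × Bool)) : Set A := {a | (a, true) ∈ p}

/-- The negative part of a walk/cycle: the arrows traversed against it. -/
def negArrows (p : List (A × Bool)) : Set A := {a | (a, false) ∈ p}

/-- The (integral) basic flow associated to a walk/cycle. -/
def basicFlowZ [DecidableEq A] (p : List (A × Bool)) : A → ℤ := fun a =>
  (p.count (a, true) : ℤ) - (p.count (a, false) : ℤ)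

/-- The basic flow associated to a walk/cycle, as a real flow. -/
def basicFlow [DecidableEq A] (p : List (A × Bool)) : A → ℝ := fun a =>
  (basicFlowZ p a : ℝ)

/-- The linear map induced by a typing map `π : A → Fin n` on flows. -/
def piMap [Fintype A] {n : ℕ} (π : A → Fin n) {R : Type} [AddCommMonoid R] (f : A → R) :
    Fin n → R := fun i => ∑ a ∈ univ.filter (fun a => π a = i), f a

/-- The support of a flow. -/
def fsupport (f : A → ℝ) : Set A := {a | f a ≠ 0}

/-- The polyhedron `F_ζ` of admissible (nonnegative) `ζ`-flows. -/
def Fpoly [Fintype A] [DecidableEq V] (Q : FQuiver V A) (ζ : V → ℝ) : Set (A → ℝ) :=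
  {f | (∀ a, 0 ≤ f a) ∧ Q.boundary f = ζ}

/-- A set of arrows contains a cycle. -/
def ContainsCycle (Q : FQuiver V A) (S : Set A) : Prop :=
  ∃ p : List (A × Bool), Q.IsCycle p ∧ ∀ s ∈ p, s.1 ∈ S

/-- A set of arrows is closed if, for every cycle of type zero, it contains the positive
part iff it contains the negative part. -/
def IsClosedConfig [Fintype A] [DecidableEq A] {n : ℕ} (Q : FQuiver V A) (π : A → Fin n)
    (T : Set A) : Prop :=
  ∀ p : List (A × Bool), Q.IsCycle p → piMap π (basicFlowZ p) = 0 →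
    (posArrows p ⊆ T ↔ negArrows p ⊆ T)

/-- The closure `S̄` of a configuration: the smallest closed over-set. -/
def confClosure [Fintype A] [DecidableEq A] {n : ℕ} (Q : FQuiver V A) (π : A → Fin n)
    (S : Set A) : Set A :=
  ⋂₀ {T | S ⊆ T ∧ IsClosedConfig Q π T}

/-- `Z₀(S)`: the space of flows with zero boundary vanishing outside `S`. -/
def Z0 [Fintype A] [DecidableEq V] (Q : FQuiver V A) (S : Set A) : Set (A → ℝ) :=
  {g | Q.boundary g = 0 ∧ ∀ a ∉ S, g a = 0}

/-- `F₀(S)`: the cone of flows with zero boundary which are nonnegative outside `S`. -/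
def F0cone [Fintype A] [DecidableEq V] (Q : FQuiver V A) (S : Set A) : Set (A → ℝ) :=
  {g | Q.boundary g = 0 ∧ ∀ a ∉ S, 0 ≤ g a}

/-- The rank of a configuration: the dimension of `span(π(Z₀(S̄)))`. -/
noncomputable def confRank [Fintype A] [DecidableEq A] [DecidableEq V] {n : ℕ} (Q : FQuiver V A)
    (π : A → Fin n) (S : Set A) : ℕ :=
  Module.finrank ℝ
    (Submodule.span ℝ ((fun g : A → ℝ => piMap π g) '' Z0 Q (confClosure Q π S)))

/-- The projected polyhedron `π(F_ζ) ⊆ ℝⁿ`. -/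
def piImg [Fintype A] [DecidableEq V] {n : ℕ} (Q : FQuiver V A) (π : A → Fin n) (ζ : V → ℝ) :
    Set (Fin n → ℝ) := (fun g : A → ℝ => piMap π g) '' Fpoly Q ζ

/-- The tangent cone `ℝ₊(P − x)` of a convex set at a point. -/
def polyTangentCone {E : Type} [AddCommGroup E] [Module ℝ E] (P : Set E) (x : E) : Set E :=
  {y | ∃ t : ℝ, 0 ≤ t ∧ ∃ p ∈ P, y = t • (p - x)}

/-- A face of a convex set: a convex extreme subset. -/
def IsFace {E : Type} [AddCommGroup E] [Module ℝ E] (P F : Set E) : Prop :=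
  Convex ℝ F ∧ IsExtreme ℝ P F

/-- `Face_ζ(S)` computed from a flow `f`: `π(F_ζ) ∩ (π(f) + span(π(Z₀(S̄))))`. -/
def faceOf [Fintype A] [DecidableEq A] [DecidableEq V] {n : ℕ} (Q : FQuiver V A)
    (π : A → Fin n) (ζ : V → ℝ) (S : Set A) (f : A → ℝ) : Set (Fin n → ℝ) :=
  piImg Q π ζ ∩
    {y | y - piMap π f ∈
      Submodule.span ℝ ((fun g : A → ℝ => piMap π g) '' Z0 Q (confClosure Q π S))}

/-- The McKay quiver of the cyclic action `1/r (w₁, …, w_n)`: vertices `ℤ/rℤ` and one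
arrow `a_v^i : v → v − w_i` for each vertex `v` and each `i`. -/
def mckayQuiver (r n : ℕ) (w : Fin n → ZMod r) : FQuiver (ZMod r) (ZMod r × Fin n) where
  t := fun a => a.1
  h := fun a => a.1 - w a.2

/-- The commutation flow `χ_v^i + χ_{v−w_i}^j − χ_v^j − χ_{v−w_j}^i`. -/
def commFlow (r n : ℕ) (w : Fin n → ZMod r) (v : ZMod r) (i j : Fin n) :
    ZMod r × Fin n → ℤ := fun a =>
  (if a = (v, i) then 1 else 0) + (if a = (v - w i, j) then 1 else 0)
    - (if a = (v, j) then 1 else 0) - (if a = (v - w j, i) then 1 else 0)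

/-- `Λ²`: the subgroup of integral flows generated by the commutation flows. -/
def mckayLambda2 (r n : ℕ) (w : Fin n → ZMod r) : AddSubgroup (ZMod r × Fin n → ℤ) :=
  AddSubgroup.closure {g | ∃ v i j, g = commFlow r n w v i j}

set_option linter.unusedSectionVars false

-- ==== aux lemmas ====
section Aux
variable [Fintype A] [DecidableEq V] [DecidableEq A] (Q : FQuiver V A)

lemma boundary_add (f g : A → ℝ) :
    Q.boundary (f + g) = Q.boundary f + Q.boundary g := by
  funext v
  simp only [FQuiver.boundary, Pi.add_apply, Finset.sum_add_distrib]
  ring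

lemma boundary_zero : Q.boundary (0 : A → ℝ) = 0 := by
  funext v; simp [FQuiver.boundary]

lemma boundary_smul (t : ℝ) (f : A → ℝ) :
    Q.boundary (t • f) = t • Q.boundary f := by
  funext v
  simp only [FQuiver.boundary, Pi.smul_apply, smul_eq_mul, ← Finset.mul_sum]
  ring

lemma boundary_neg (f : A → ℝ) : Q.boundary (-f) = -Q.boundary f := by
  funext v
  simp only [FQuiver.boundary, Pi.neg_apply, Finset.sum_neg_distrib]
  ring

lemma boundary_sub (f g : A → ℝ) :
    Q.boundary (f - g) = Q.boundary f - Q.boundary g := by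
  funext v
  simp only [FQuiver.boundary, Pi.sub_apply, Finset.sum_sub_distrib]
  ring

lemma boundary_sum {ι : Type} (s : Finset ι) (F : ι → A → ℝ) :
    Q.boundary (∑ i ∈ s, F i) = ∑ i ∈ s, Q.boundary (F i) := by
  induction s using Finset.cons_induction with
  | empty => simpa using boundary_zero Q
  | cons i s hi ih => rw [Finset.sum_cons, Finset.sum_cons, boundary_add, ih]

variable {n : ℕ} (π : A → Fin n)

lemma piMap_add (f g : A → ℝ) : piMap π (f + g) = piMap π f + piMap π g := by
  funext i; simp [piMap, Finset.sum_add_distrib]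

lemma piMap_zero : piMap π (0 : A → ℝ) = 0 := by
  funext i; simp [piMap]

lemma piMap_smul (t : ℝ) (f : A → ℝ) : piMap π (t • f) = t • piMap π f := by
  funext i; simp [piMap, ← Finset.mul_sum]

lemma piMap_sub (f g : A → ℝ) : piMap π (f - g) = piMap π f - piMap π g := by
  funext i; simp [piMap, Finset.sum_sub_distrib]

end Aux

section BF
variable [DecidableEq A]

lemma basicFlow_cons (s : A × Bool) (p : List (A × Bool)) :
    basicFlow (s :: p) = basicFlow [s] + basicFlow p := by
  funext a
  simp only [basicFlow, basicFlowZ, Pi.add_apply, List.count_cons, List.count_nil]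
  push_cast
  ring

lemma basicFlow_support (p : List (A × Bool)) (a : A) (h : basicFlow p a ≠ 0) :
    a ∈ posArrows p ∨ a ∈ negArrows p := by
  by_contra hcon
  push_neg at hcon
  obtain ⟨h1, h2⟩ := hcon
  apply h
  simp only [posArrows, negArrows, Set.mem_setOf_eq] at h1 h2
  simp [basicFlow, basicFlowZ, List.count_eq_zero_of_not_mem, h1, h2]

lemma one_le_basicFlow (p : List (A × Bool)) (a : A)
    (hp : a ∈ posArrows p) (hn : a ∉ negArrows p) : 1 ≤ basicFlow p a := by
  simp only [posArrows, negArrows, Set.mem_setOf_eq] at hp hn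
  have h1 : 0 < p.count (a, true) := List.count_pos_iff.mpr hp
  have h2 : p.count (a, false) = 0 := List.count_eq_zero_of_not_mem hn
  simp only [basicFlow, basicFlowZ, h2]
  have : (1:ℝ) ≤ (p.count (a, true) : ℝ) := by exact_mod_cast h1
  push_cast
  linarith

lemma basicFlow_le_neg_one (p : List (A × Bool)) (a : A)
    (hn : a ∈ negArrows p) (hp : a ∉ posArrows p) : basicFlow p a ≤ -1 := by
  simp only [posArrows, negArrows, Set.mem_setOf_eq] at hp hn
  have h1 : 0 < p.count (a, false) := List.count_pos_iff.mpr hn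
  have h2 : p.count (a, true) = 0 := List.count_eq_zero_of_not_mem hp
  simp only [basicFlow, basicFlowZ, h2]
  have : (1:ℝ) ≤ (p.count (a, false) : ℝ) := by exact_mod_cast h1
  push_cast
  linarith

lemma basicFlow_pos_mem (p : List (A × Bool)) (a : A) (h : 0 < basicFlow p a) :
    a ∈ posArrows p := by
  by_contra hc
  simp only [posArrows, Set.mem_setOf_eq] at hc
  have : p.count (a, true) = 0 := List.count_eq_zero_of_not_mem hc
  simp only [basicFlow, basicFlowZ, this] at h
  push_cast at h
  have : (0:ℝ) ≤ (p.count (a, false) : ℝ) := by positivity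
  linarith

lemma basicFlow_neg_mem (p : List (A × Bool)) (a : A) (h : basicFlow p a < 0) :
    a ∈ negArrows p := by
  by_contra hc
  simp only [negArrows, Set.mem_setOf_eq] at hc
  have : p.count (a, false) = 0 := List.count_eq_zero_of_not_mem hc
  simp only [basicFlow, basicFlowZ, this] at h
  push_cast at h
  have : (0:ℝ) ≤ (p.count (a, true) : ℝ) := by positivity
  linarith
end BF

section Walk
variable [Fintype A] [DecidableEq V] [DecidableEq A] (Q : FQuiver V A)

lemma boundary_single (s : A × Bool) :
    Q.boundary (basicFlow [s]) =
      fun u => (if Q.stepDst s = u then (1:ℝ) else 0) - (if Q.stepSrc s = u then 1 else 0) := by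
  obtain ⟨b, d⟩ := s
  have hbf : basicFlow [(b, d)] = fun a =>
      if a = b then (if d then (1:ℝ) else -1) else 0 := by
    funext a
    simp only [basicFlow, basicFlowZ, List.count_cons, List.count_nil]
    by_cases h : a = b
    · subst h
      cases d <;> simp [Prod.ext_iff]
    · have h' : ¬ b = a := fun hh => h hh.symm
      simp [Prod.ext_iff, h, h']
  funext u
  rw [hbf]
  simp only [FQuiver.boundary]
  rw [Finset.sum_ite_eq' _ b, Finset.sum_ite_eq' _ b]
  simp only [Finset.mem_filter, Finset.mem_univ, true_and, FQuiver.stepSrc, FQuiver.stepDst]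
  cases d <;> by_cases h1 : Q.h b = u <;> by_cases h2 : Q.t b = u <;>
    simp [h1, h2, eq_comm] <;> ring

lemma boundary_walk (p : List (A × Bool)) (v v' : V)
    (hh : p.head?.map Q.stepSrc = some v) (hl : p.getLast?.map Q.stepDst = some v')
    (hc : List.Chain' (fun s s' => Q.stepDst s = Q.stepSrc s') p) :
    Q.boundary (basicFlow p) =
      fun u => (if v' = u then (1:ℝ) else 0) - (if v = u then 1 else 0) := by
  induction p generalizing v with
  | nil => simp at hh
  | cons s q ih =>
    cases q with
    | nil =>
      simp only [List.head?, Option.map_some, Option.some.injEq] at hh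
      simp at hl
      rw [boundary_single Q s]
      funext u
      rw [hh, hl]
    | cons s' q' =>
      have hcc := List.isChain_cons_cons.mp hc
      have h1 : Q.stepDst s = Q.stepSrc s' := hcc.1
      have hl' : (s' :: q').getLast?.map Q.stepDst = some v' := by
        rwa [List.getLast?_cons_cons] at hl
      have ihq := ih (v := Q.stepSrc s') (by simp) hl' hcc.2
      simp only [List.head?, Option.map_some, Option.some.injEq] at hh
      rw [basicFlow_cons, boundary_add, boundary_single Q s, ihq]
      funext u
      simp only [Pi.add_apply]
      rw [h1, hh]
      ring

lemma boundary_cycle (p : List (A × Bool)) (hp : Q.IsCycle p) :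
    Q.boundary (basicFlow p) = 0 := by
  obtain ⟨v, _, hh, hl, hc, _⟩ := hp
  rw [boundary_walk Q p v v hh hl hc]
  funext u
  simp

end Walk

section Closure
variable [Fintype A] [DecidableEq V] [DecidableEq A] {n : ℕ}

/-- Inductive description of the closure. -/
inductive InCl (Q : FQuiver V A) (π : A → Fin n) (T : Set A) : A → Prop
  | base {a : A} : a ∈ T → InCl Q π T a
  | ofPos {p : List (A × Bool)} {a : A} : Q.IsCycle p → piMap π (basicFlowZ p) = 0 →
      (∀ b ∈ posArrows p, InCl Q π T b) → a ∈ negArrows p → InCl Q π T a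
  | ofNeg {p : List (A × Bool)} {a : A} : Q.IsCycle p → piMap π (basicFlowZ p) = 0 →
      (∀ b ∈ negArrows p, InCl Q π T b) → a ∈ posArrows p → InCl Q π T a

variable (Q : FQuiver V A) (π : A → Fin n) (T : Set A)

lemma inCl_closed : IsClosedConfig Q π {a | InCl Q π T a} := by
  intro p hp ht
  constructor
  · intro hpos b hb
    exact InCl.ofPos hp ht (fun c hc => hpos hc) hb
  · intro hneg b hb
    exact InCl.ofNeg hp ht (fun c hc => hneg hc) hb

lemma subset_confClosure : T ⊆ confClosure Q π T :=
  fun a ha => Set.mem_sInter.mpr fun _ hT' => hT'.1 ha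

lemma confClosure_closed : IsClosedConfig Q π (confClosure Q π T) := by
  intro p hp ht
  constructor
  · intro hpos b hb
    refine Set.mem_sInter.mpr fun T' hT' => (hT'.2 p hp ht).1 (fun c hc => ?_) hb
    exact Set.mem_sInter.mp (hpos hc) T' hT'
  · intro hneg b hb
    refine Set.mem_sInter.mpr fun T' hT' => (hT'.2 p hp ht).2 (fun c hc => ?_) hb
    exact Set.mem_sInter.mp (hneg hc) T' hT'

lemma confClosure_eq_inCl : confClosure Q π T = {a | InCl Q π T a} := by
  apply subset_antisymm
  · exact Set.sInter_subset_of_mem ⟨fun a ha => InCl.base ha, inCl_closed Q π T⟩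
  · intro a ha
    induction ha with
    | base h => exact subset_confClosure Q π T h
    | @ofPos p b hp ht hpos hb ih =>
      exact (confClosure_closed Q π T p hp ht).1 (fun c hc => ih c hc) hb
    | @ofNeg p b hp ht hneg hb ih =>
      exact (confClosure_closed Q π T p hp ht).2 (fun c hc => ih c hc) hb
end Closure

section Key
variable [Fintype A] [Fintype V] [DecidableEq V] [DecidableEq A]
variable (Q : FQuiver V A)

/-- Combination lemma: from single-arrow positive flows, build one dominating `m`. -/
lemma lemmaC (C T : Set A) (m : A → ℝ)
    (hz : ∀ b ∉ T, 0 < m b → ∃ z : A → ℝ, Q.boundary z = 0 ∧ (∀ c, z c ≠ 0 → c ∈ C) ∧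
      (∀ c ∉ T, 0 ≤ z c) ∧ 0 < z b) :
    ∃ z : A → ℝ, Q.boundary z = 0 ∧ (∀ c, z c ≠ 0 → c ∈ C) ∧ (∀ c ∉ T, 0 ≤ z c) ∧
      ∀ b ∉ T, m b ≤ z b := by
  classical
  set P : A → Prop := fun b => b ∉ T ∧ 0 < m b with hP
  set zf : A → A → ℝ := fun b => if h : P b then (hz b h.1 h.2).choose else 0 with hzfdef
  have hzf : ∀ b, P b → Q.boundary (zf b) = 0 ∧ (∀ c, zf b c ≠ 0 → c ∈ C) ∧
      (∀ c ∉ T, 0 ≤ zf b c) ∧ 0 < zf b b := by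
    intro b hb
    simp only [hzfdef, dif_pos hb]
    exact (hz b hb.1 hb.2).choose_spec
  set F : A → A → ℝ := fun b => if h : P b then (m b / zf b b) • zf b else 0 with hFdef
  have hF0 : ∀ b, Q.boundary (F b) = 0 := by
    intro b
    by_cases h : P b
    · simp only [hFdef, dif_pos h, boundary_smul, (hzf b h).1, smul_zero]
    · simp only [hFdef, dif_neg h, boundary_zero]
  have hFnn : ∀ b c, c ∉ T → 0 ≤ F b c := by
    intro b c hc
    by_cases h : P b
    · simp only [hFdef, dif_pos h, Pi.smul_apply, smul_eq_mul]
      have h1 := (hzf b h).2.2.1 c hc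
      have h2 : 0 < zf b b := (hzf b h).2.2.2
      have : 0 ≤ m b / zf b b := le_of_lt (div_pos h.2 h2)
      exact mul_nonneg this h1
    · simp only [hFdef]
      rw [dif_neg h]
      simp
  refine ⟨∑ b, F b, ?_, ?_, ?_, ?_⟩
  · rw [boundary_sum]
    exact Finset.sum_eq_zero fun b _ => hF0 b
  · intro c hc
    rw [Finset.sum_apply] at hc
    obtain ⟨b, _, hb⟩ := Finset.exists_ne_zero_of_sum_ne_zero hc
    by_cases h : P b
    · simp only [hFdef, dif_pos h, Pi.smul_apply, smul_eq_mul] at hb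
      exact (hzf b h).2.1 c (right_ne_zero_of_mul hb)
    · exfalso
      apply hb
      simp only [hFdef]
      rw [dif_neg h]
      simp
  · intro c hc
    rw [Finset.sum_apply]
    exact Finset.sum_nonneg fun b _ => hFnn b c hc
  · intro b hb
    rw [Finset.sum_apply]
    by_cases hm : 0 < m b
    · have hPb : P b := ⟨hb, hm⟩
      have hFb : F b b = m b := by
        have h2 : zf b b ≠ 0 := ne_of_gt (hzf b hPb).2.2.2
        simp only [hFdef, dif_pos hPb, Pi.smul_apply, smul_eq_mul]
        field_simp
      calc m b = F b b := hFb.symm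
        _ ≤ ∑ c, F c b := Finset.single_le_sum (fun c _ => hFnn c b hb) (Finset.mem_univ b)
    · have : 0 ≤ ∑ c, F c b := Finset.sum_nonneg fun c _ => hFnn c b hb
      linarith

lemma lemmaB_step (C T : Set A) (w : A → ℝ) (a : A)
    (hw : Q.boundary w = 0) (hsupp : ∀ c, w c ≠ 0 → c ∈ C) (hwa : 0 < w a)
    (hz : ∀ b ∉ T, w b < 0 → ∃ z : A → ℝ, Q.boundary z = 0 ∧ (∀ c, z c ≠ 0 → c ∈ C) ∧
      (∀ c ∉ T, 0 ≤ z c) ∧ 0 < z b)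
    (haT : a ∉ T) :
    ∃ z : A → ℝ, Q.boundary z = 0 ∧ (∀ c, z c ≠ 0 → c ∈ C) ∧ (∀ c ∉ T, 0 ≤ z c) ∧
      0 < z a := by
  obtain ⟨z, h1, h2, h3, h4⟩ :=
    lemmaC Q C T (fun b => -w b) (fun b hb hm => hz b hb (by have hm' : 0 < -w b := hm; linarith))
  refine ⟨w + z, ?_, ?_, ?_, ?_⟩
  · rw [boundary_add, hw, h1, add_zero]
  · intro c hc
    by_cases h : w c = 0
    · exact h2 c (by simpa [h] using hc)
    · exact hsupp c h
  · intro c hcT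
    have := h4 c hcT
    simp only [Pi.add_apply]
    linarith
  · have := h3 a haT
    simp only [Pi.add_apply]
    linarith

variable {n : ℕ} (π : A → Fin n)

lemma lemmaB (T : Set A) {a : A} (ha : InCl Q π T a) :
    ∃ z : A → ℝ, Q.boundary z = 0 ∧ (∀ c, z c ≠ 0 → InCl Q π T c) ∧
      (∀ c ∉ T, 0 ≤ z c) ∧ (a ∈ T ∨ 0 < z a) := by
  induction ha with
  | base h => exact ⟨0, boundary_zero Q, by simp, by simp, Or.inl h⟩
  | @ofPos p b hp ht hpos hb ih =>
    by_cases hbT : b ∈ T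
    · exact ⟨0, boundary_zero Q, by simp, by simp, Or.inl hbT⟩
    by_cases hbp : b ∈ posArrows p
    · exact ih b hbp
    have hwa : 0 < (-(basicFlow p)) b := by
      have := basicFlow_le_neg_one p b hb hbp
      simp only [Pi.neg_apply]
      linarith
    obtain ⟨z, z1, z2, z3, z4⟩ := lemmaB_step Q {c | InCl Q π T c} T (-(basicFlow p)) b
      (by rw [boundary_neg, boundary_cycle Q p hp, neg_zero])
      (by
        intro c hc
        simp only [Pi.neg_apply, neg_ne_zero] at hc
        rcases basicFlow_support p c hc with h | h
        · exact hpos c h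
        · exact InCl.ofPos hp ht hpos h)
      hwa
      (by
        intro c hcT hcneg
        simp only [Pi.neg_apply] at hcneg
        have hcpos : c ∈ posArrows p := basicFlow_pos_mem p c (by linarith)
        obtain ⟨z, z1, z2, z3, z4⟩ := ih c hcpos
        exact ⟨z, z1, z2, z3, z4.resolve_left hcT⟩)
      hbT
    exact ⟨z, z1, z2, z3, Or.inr z4⟩
  | @ofNeg p b hp ht hneg hb ih =>
    by_cases hbT : b ∈ T
    · exact ⟨0, boundary_zero Q, by simp, by simp, Or.inl hbT⟩
    by_cases hbn : b ∈ negArrows p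
    · exact ih b hbn
    have hwa : 0 < basicFlow p b := by
      have := one_le_basicFlow p b hb hbn
      linarith
    obtain ⟨z, z1, z2, z3, z4⟩ := lemmaB_step Q {c | InCl Q π T c} T (basicFlow p) b
      (boundary_cycle Q p hp)
      (by
        intro c hc
        rcases basicFlow_support p c hc with h | h
        · exact InCl.ofNeg hp ht hneg h
        · exact hneg c h)
      hwa
      (by
        intro c hcT hcneg
        have hcneg' : c ∈ negArrows p := basicFlow_neg_mem p c hcneg
        obtain ⟨z, z1, z2, z3, z4⟩ := ih c hcneg'
        exact ⟨z, z1, z2, z3, z4.resolve_left hcT⟩)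
      hbT
    exact ⟨z, z1, z2, z3, Or.inr z4⟩
end Key


/-- If `f ∈ F_ζ` has support a tree `T` of rank `0`, then the tangent
cone of `π(F_ζ)` at the extreme point `π(f)` equals `π(F₀(T))`; moreover
`π(F₀(T̄)) = π(F₀(T))`, so this tangent cone is independent of `ζ`. -/
theorem statement7 {V A : Type} [Fintype V] [Fintype A] [DecidableEq V] [DecidableEq A]
    (Q : FQuiver V A) {n : ℕ} (hn : 1 ≤ n) (π : A → Fin n) (ζ : V → ℝ)
    (f : A → ℝ) (hf : f ∈ Fpoly Q ζ)
    (htree : ¬ ContainsCycle Q (fsupport f)) (hrank : confRank Q π (fsupport f) = 0) :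
    polyTangentCone (piImg Q π ζ) (piMap π f) =
      (fun g : A → ℝ => piMap π g) '' F0cone Q (fsupport f) ∧
    (fun g : A → ℝ => piMap π g) '' F0cone Q (confClosure Q π (fsupport f)) =
      (fun g : A → ℝ => piMap π g) '' F0cone Q (fsupport f) := by
  classical
  set T := fsupport f with hTdef
  obtain ⟨hfnn, hfb⟩ := hf
  have hfT : ∀ a, a ∉ T → f a = 0 := by
    intro a ha
    by_contra hne
    exact ha hne
  have hpi0 : ∀ z ∈ Z0 Q (confClosure Q π T), piMap π z = 0 := by
    intro z hz
    have hmem : piMap π z ∈ Submodule.span ℝ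
        ((fun g : A → ℝ => piMap π g) '' Z0 Q (confClosure Q π T)) :=
      Submodule.subset_span ⟨z, hz, rfl⟩
    have hbot : Submodule.span ℝ
        ((fun g : A → ℝ => piMap π g) '' Z0 Q (confClosure Q π T)) = ⊥ :=
      Submodule.finrank_eq_zero.mp hrank
    rw [hbot, Submodule.mem_bot] at hmem
    exact hmem
  constructor
  · -- part 1 : tangent cone
    apply subset_antisymm
    · rintro y ⟨t, ht0, p, ⟨g, hg, rfl⟩, rfl⟩
      refine ⟨t • (g - f), ⟨?_, ?_⟩, ?_⟩
      · rw [boundary_smul, boundary_sub, hg.2, hfb, sub_self, smul_zero]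
      · intro a haT
        have hfa : f a = 0 := hfT a haT
        have hga := hg.1 a
        simp only [Pi.smul_apply, Pi.sub_apply, hfa, sub_zero, smul_eq_mul]
        exact mul_nonneg ht0 hga
      · show piMap π (t • (g - f)) = t • (piMap π g - piMap π f)
        rw [piMap_smul, piMap_sub]
    · rintro y ⟨h, ⟨hh1, hh2⟩, rfl⟩
      -- choose a small positive t
      have hmemne : (insert (1:ℝ)
          (Finset.univ.image fun a => if h a < 0 then f a / (-h a) else 1)).Nonempty :=
        Finset.insert_nonempty _ _
      set s : Finset ℝ :=
        insert (1:ℝ) (Finset.univ.image fun a => if h a < 0 then f a / (-h a) else 1) with hs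
      set t : ℝ := s.min' hmemne with htdef
      have hfa_pos : ∀ a, h a < 0 → 0 < f a := by
        intro a ha
        rcases lt_or_eq_of_le (hfnn a) with h' | h'
        · exact h'
        · exfalso
          have haT : a ∉ T := by simp [hTdef, fsupport, ← h']
          linarith [hh2 a haT]
      have hspos : ∀ x ∈ s, 0 < x := by
        intro x hx
        rw [hs] at hx
        rcases Finset.mem_insert.mp hx with h' | h'
        · rw [h']; norm_num
        · obtain ⟨a, _, rfl⟩ := Finset.mem_image.mp h'
          by_cases hha : h a < 0
          · rw [if_pos hha]
            exact div_pos (hfa_pos a hha) (by linarith)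
          · rw [if_neg hha]; norm_num
      have ht0 : 0 < t := hspos t (Finset.min'_mem s hmemne)
      have htle : ∀ a, h a < 0 → t * (-h a) ≤ f a := by
        intro a ha
        have hmem : (f a / (-h a)) ∈ s := by
          rw [hs]
          refine Finset.mem_insert_of_mem (Finset.mem_image.mpr ⟨a, Finset.mem_univ a, ?_⟩)
          rw [if_pos ha]
        have := Finset.min'_le s _ hmem
        rw [← htdef] at this
        exact (le_div_iff₀ (by linarith)).mp this
      have hmemF : f + t • h ∈ Fpoly Q ζ := by
        constructor
        · intro a
          by_cases hha : h a < 0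
          · have := htle a hha
            simp only [Pi.add_apply, Pi.smul_apply, smul_eq_mul]
            nlinarith
          · push_neg at hha
            have : 0 ≤ t * h a := mul_nonneg (le_of_lt ht0) hha
            simp only [Pi.add_apply, Pi.smul_apply, smul_eq_mul]
            linarith [hfnn a]
        · rw [boundary_add, boundary_smul, hh1, hfb, smul_zero, add_zero]
      refine ⟨t⁻¹, by positivity, piMap π (f + t • h), ⟨f + t • h, hmemF, rfl⟩, ?_⟩
      rw [piMap_add, piMap_smul]
      rw [add_sub_cancel_left]
      rw [smul_smul, inv_mul_cancel₀ (ne_of_gt ht0), one_smul]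
  · -- part 2
    apply subset_antisymm
    · rintro y ⟨g, ⟨hg1, hg2⟩, rfl⟩
      have hcl := confClosure_eq_inCl Q π T
      have hhyp : ∀ b ∉ T, 0 < (fun b => -g b) b → ∃ z : A → ℝ, Q.boundary z = 0 ∧
          (∀ c, z c ≠ 0 → c ∈ confClosure Q π T) ∧ (∀ c ∉ T, 0 ≤ z c) ∧ 0 < z b := by
        intro b hbT hmb
        have hmb' : 0 < -g b := hmb
        have hgb : g b < 0 := by linarith
        have hbcl : b ∈ confClosure Q π T := by
          by_contra hbc
          linarith [hg2 b hbc]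
        rw [hcl] at hbcl
        obtain ⟨z, z1, z2, z3, z4⟩ := lemmaB Q π T hbcl
        refine ⟨z, z1, fun c hc => ?_, z3, z4.resolve_left hbT⟩
        rw [hcl]
        exact z2 c hc
      obtain ⟨z, z1, z2, z3, z4⟩ := lemmaC Q (confClosure Q π T) T (fun b => -g b) hhyp
      have hz0 : z ∈ Z0 Q (confClosure Q π T) := by
        refine ⟨z1, fun c hc => ?_⟩
        by_contra hne
        exact hc (z2 c hne)
      refine ⟨g + z, ⟨?_, ?_⟩, ?_⟩
      · rw [boundary_add, hg1, z1, add_zero]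
      · intro a haT
        have h4 := z4 a haT
        have h4' : -g a ≤ z a := h4
        simp only [Pi.add_apply]
        linarith
      · show piMap π (g + z) = piMap π g
        rw [piMap_add, hpi0 z hz0, add_zero]
    · rintro y ⟨g, ⟨hg1, hg2⟩, rfl⟩
      exact ⟨g, ⟨hg1, fun a ha => hg2 a fun haT => ha (subset_confClosure Q π T haT)⟩, rfl⟩
end

section
/- Let ζ : 𝒬₀ → ℝ be generic in the sense that Σ_{v ∈ V'} ζ(v) ≠ 0 for every nonempty proper subset V' ⊊ 𝒬₀. Then for every f ∈ F_ζ, the support of f is a spanning subset of 𝒬₁: any two vertices of 𝒬 are connected by a path all of whose arrows lie in supp(f). -/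
/-!
Common framework: finite quivers, flows, boundaries, cycles, closures, the projection π,
and the solution polyhedra of the (generalised) transportation problem, following
Sardo Infirri, "Orbifold Singularities and McKay Flows".
-/

open Finset

variable {V A : Type}

/-!
The vertices reachable from `v` through `supp f` form a set `W` that no arrow of `supp f`
leaves or enters, so the flux of `f` out of `W` is zero and `∑_{u ∈ W} ζ u = ∑_{u ∈ W} ∂f u = 0`.
As `v ∈ W`, genericity forces `W` to be all of `𝒬₀`. A chain of support arrows from `v` to `v'`
becomes a walk once immediate backtracks along the same arrow are cancelled.
-/

namespace FQuiver

variable {V A : Type} (Q : FQuiver V A)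

def AdjVia (S : Set A) (u w : V) : Prop :=
  ∃ s : A × Bool, s.1 ∈ S ∧ Q.stepSrc s = u ∧ Q.stepDst s = w

variable {Q}

theorem AdjVia.symm {S : Set A} {u w : V} (h : Q.AdjVia S u w) : Q.AdjVia S w u := by
  obtain ⟨⟨a, b⟩, ha, rfl, rfl⟩ := h
  exact ⟨(a, !b), ha, by cases b <;> rfl, by cases b <;> rfl⟩

theorem adjVia_tail_head {S : Set A} {a : A} (ha : a ∈ S) : Q.AdjVia S (Q.t a) (Q.h a) :=
  ⟨(a, true), ha, rfl, rfl⟩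

theorem isWalk_singleton_iff {s : A × Bool} {v w : V} :
    Q.IsWalk [s] v w ↔ Q.stepSrc s = v ∧ Q.stepDst s = w := by
  simp [IsWalk, List.Chain']

theorem isWalk_append_singleton_iff {q : List (A × Bool)} (hq : q ≠ []) {s : A × Bool}
    {v w : V} :
    Q.IsWalk (q ++ [s]) v w ↔
      Q.IsWalk q v (Q.stepSrc s) ∧ (q.getLast hq).1 ≠ s.1 ∧ Q.stepDst s = w := by
  simp only [IsWalk, List.Chain', List.isChain_append, List.getLast?_eq_some_getLast hq,
    List.getLast?_concat, List.head?_append, List.head?_eq_some_head hq, Option.or_some,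
    Option.map_some, Option.some.injEq, Option.mem_def, List.head?_cons, List.isChain_singleton,
    Option.getD_some, forall_eq', true_and, ne_eq, List.append_eq_nil_iff, List.cons_ne_nil,
    and_false, not_false_eq_true, hq]
  tauto

theorem IsWalk.stepDst_getLast {p : List (A × Bool)} {v w : V} (hp : Q.IsWalk p v w) :
    Q.stepDst (p.getLast hp.1) = w := by
  simpa [List.getLast?_eq_some_getLast hp.1] using hp.2.2.1

theorem stepDst_eq_stepSrc_of_reverse {s l : A × Bool} (h₁ : s.1 = l.1) (h₂ : s.2 ≠ l.2) :
    Q.stepDst s = Q.stepSrc l := by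
  obtain ⟨a, b⟩ := s
  obtain ⟨a', b'⟩ := l
  obtain rfl : a = a' := h₁
  cases b <;> cases b' <;> simp_all [stepDst, stepSrc]

theorem exists_isWalk_of_reflTransGen {S : Set A} {v u : V}
    (h : Relation.ReflTransGen (Q.AdjVia S) v u) :
    u = v ∨ ∃ p : List (A × Bool), Q.IsWalk p v u ∧ ∀ s ∈ p, s.1 ∈ S := by
  induction h with
  | refl => exact .inl rfl
  | tail _ hstep ih =>
    obtain ⟨s, hs, rfl, rfl⟩ := hstep
    rcases ih with rfl | ⟨p, hp, hpS⟩
    · exact .inr ⟨[s], isWalk_singleton_iff.2 ⟨rfl, rfl⟩, by simpa using hs⟩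
    have hp₀ : p ≠ [] := hp.1
    set l := p.getLast hp₀
    by_cases hback : l.1 = s.1
    swap
    · refine .inr ⟨p ++ [s], (isWalk_append_singleton_iff hp₀).2 ⟨hp, hback, rfl⟩, ?_⟩
      exact List.forall_mem_append.2 ⟨hpS, by simpa using hs⟩
    by_cases hsame : s.2 = l.2
    · have hloop : Q.stepDst s = Q.stepSrc s :=
        (congrArg Q.stepDst (Prod.ext hback.symm hsame : s = l)).trans hp.stepDst_getLast
      exact .inr ⟨p, hloop ▸ hp, hpS⟩
    rw [Q.stepDst_eq_stepSrc_of_reverse hback.symm hsame]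
    rw [← List.dropLast_append_getLast hp₀] at hp
    by_cases hq : p.dropLast = []
    · rw [hq, List.nil_append, isWalk_singleton_iff] at hp
      exact .inl hp.1
    · exact .inr ⟨p.dropLast, ((isWalk_append_singleton_iff hq).1 hp).1,
        fun s' hs' => hpS s' (List.dropLast_subset _ hs')⟩

theorem sum_boundary [Fintype A] [DecidableEq V] {R : Type} [AddCommGroup R] (f : A → R)
    (W : Finset V) :
    ∑ v ∈ W, Q.boundary f v = ∑ a with Q.h a ∈ W, f a - ∑ a with Q.t a ∈ W, f a := by
  simp only [boundary, Finset.sum_sub_distrib, Finset.sum_fiberwise_eq_sum_filter]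

theorem sum_boundary_eq_zero_of_mem_iff [Fintype A] [DecidableEq V] {R : Type} [AddCommGroup R]
    {f : A → R} {W : Finset V} (hW : ∀ a, f a ≠ 0 → (Q.t a ∈ W ↔ Q.h a ∈ W)) :
    ∑ v ∈ W, Q.boundary f v = 0 := by
  rw [sum_boundary, sub_eq_zero, Finset.sum_filter, Finset.sum_filter]
  refine Finset.sum_congr rfl fun a _ => ?_
  by_cases ha : f a = 0
  · simp [ha]
  · simp [hW a ha]

end FQuiver

theorem statement18_general {V A : Type} [Fintype V] [Fintype A] [DecidableEq V]
    (Q : FQuiver V A) (ζ : V → ℝ)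
    (hgen : ∀ V' : Finset V, V'.Nonempty → V' ≠ Finset.univ → ∑ v ∈ V', ζ v ≠ 0)
    (f : A → ℝ) (hf : f ∈ Fpoly Q ζ) :
    ∀ v v' : V, v ≠ v' →
      ∃ p : List (A × Bool), Q.IsWalk p v v' ∧ ∀ s ∈ p, s.1 ∈ fsupport f := by
  classical
  intro v v' hvv'
  set W := univ.filter (Relation.ReflTransGen (Q.AdjVia (fsupport f)) v)
  have hcut : ∀ a, f a ≠ 0 → (Q.t a ∈ W ↔ Q.h a ∈ W) := fun a ha => by
    have hadj := FQuiver.adjVia_tail_head (Q := Q) (S := fsupport f) ha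
    simp only [W, mem_filter, mem_univ, true_and]
    exact ⟨(·.tail hadj), (·.tail hadj.symm)⟩
  have hW : W = univ := by
    by_contra hW
    refine hgen W ⟨v, by simp [W, Relation.ReflTransGen.refl]⟩ hW ?_
    rw [← hf.2]
    exact Q.sum_boundary_eq_zero_of_mem_iff hcut
  have hreach : Relation.ReflTransGen (Q.AdjVia (fsupport f)) v v' := by
    have hv' : v' ∈ W := hW ▸ mem_univ v'
    simpa [W] using hv'
  exact (Q.exists_isWalk_of_reflTransGen hreach).resolve_left hvv'.symm

/-- If `ζ` is generic (no nonempty proper subset of vertices has zero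
total weight), then the support of every `f ∈ F_ζ` is a spanning subset: any two distinct
vertices are connected by a path all of whose arrows lie in `supp(f)`. -/
theorem statement18 {V A : Type} [Fintype V] [Fintype A] [DecidableEq V] [DecidableEq A]
    (Q : FQuiver V A) (ζ : V → ℝ)
    (hgen : ∀ V' : Finset V, V'.Nonempty → V' ≠ Finset.univ → ∑ v ∈ V', ζ v ≠ 0)
    (f : A → ℝ) (hf : f ∈ Fpoly Q ζ) :
    ∀ v v' : V, v ≠ v' →
      ∃ p : List (A × Bool), Q.IsWalk p v v' ∧ ∀ s ∈ p, s.1 ∈ fsupport f :=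
  statement18_general Q ζ hgen f hf
end
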